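/- arXiv:2112.00105 — 5 statements merged into one kernel-verified Lean document; each statement's English description precedes it below -/
import Mathlib

section
/- Let Q be a quiver with a finite partition of its arrow set into n+1 arrow types (n > 0) such that there is an arrow of each type leaving each vertex. Then the conjunction of: (3) every maximal simple path is a circuit, and (4) two admissible paths leaving the same vertex arrive at the same vertex if and only if they have the same type, is equivalent to: (3') two paths leaving the same vertex arrive at the same vertex if and only if the difference between the number of arrows of each type in the two paths is independent of the type. -/
open CategoryTheory CategoryTheory.Limits

universe u v

/-- A quiver with arrows partitioned into `n+1` arrow types. -/
structure TypedQuiver (n : ℕ) where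
  V : Type
  E : Type
  src : E → V
  tgt : E → V
  typ : E → Fin (n + 1)

namespace TypedQuiver

variable {n : ℕ}

/-- Paths in a typed quiver. -/
inductive Path (Q : TypedQuiver n) : Q.V → Q.V → Type where
  | nil (v : Q.V) : Path Q v v
  | cons {u : Q.V} (e : Q.E) (γ : Path Q u (Q.src e)) : Path Q u (Q.tgt e)

namespace Path

variable {Q : TypedQuiver n}

/-- Length of a path. -/
def length : ∀ {u w : Q.V}, Q.Path u w → ℕ
  | _, _, nil _ => 0
  | _, _, cons _ γ => length γ + 1

/-- The number of arrows of a given type in a path. -/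
def count : ∀ {u w : Q.V}, Q.Path u w → Fin (n + 1) → ℕ
  | _, _, nil _, _ => 0
  | _, _, cons e γ, t => count γ t + (if Q.typ e = t then 1 else 0)

/-- Concatenation of paths. -/
def comp : ∀ {u w x : Q.V}, Q.Path u w → Q.Path w x → Q.Path u x
  | _, _, _, γ, nil _ => γ
  | _, _, _, γ, cons e δ => cons e (comp γ δ)

/-- A path is admissible if some arrow type does not occur in it. -/
def Admissible {u w : Q.V} (γ : Q.Path u w) : Prop := ∃ t, γ.count t = 0

/-- A path is simple if each arrow type occurs at most once. -/
def Simple {u w : Q.V} (γ : Q.Path u w) : Prop := ∀ t, γ.count t ≤ 1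

/-- A maximal simple path: each arrow type occurs exactly once. -/
def MaximalSimple {u w : Q.V} (γ : Q.Path u w) : Prop := ∀ t, γ.count t = 1

/-- The essential type of a path: the set of arrow types occurring in it. -/
def essType {u w : Q.V} (γ : Q.Path u w) : Set (Fin (n + 1)) := {t | 0 < γ.count t}

end Path

/-- A `ℤⁿ`-structure on a typed quiver. -/
structure IsZn (Q : TypedQuiver n) : Prop where
  npos : 0 < n
  nonempty : Nonempty Q.V
  unique_out : ∀ (v : Q.V) (t : Fin (n + 1)), ∃! e : Q.E, Q.src e = v ∧ Q.typ e = t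
  connected : ∀ u w : Q.V, ∃ γ : Q.Path u w, γ.Admissible
  circuit : ∀ (u w : Q.V) (γ : Q.Path u w), γ.MaximalSimple → u = w
  same_type : ∀ (u w x : Q.V) (γ : Q.Path u w) (μ : Q.Path u x),
      γ.Admissible → μ.Admissible → (w = x ↔ γ.count = μ.count)

/-- Two distinct vertices are neighbors if an admissible simple path connects them. -/
def Neighbors (Q : TypedQuiver n) (u w : Q.V) : Prop :=
  u ≠ w ∧ ∃ γ : Q.Path u w, γ.Admissible ∧ γ.Simple

/-- The hull of a set of vertices. -/
def hull (Q : TypedQuiver n) (H : Set Q.V) : Set Q.V :=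
  {v | ∀ t : Fin (n + 1), ∃ z ∈ H, ∃ γ : Q.Path z v, γ.count t = 0}

/-- A representation of a typed quiver in a category. -/
structure Rep (Q : TypedQuiver n) (C : Type u) [Category.{v} C] where
  obj : Q.V → C
  map : ∀ e : Q.E, obj (Q.src e) ⟶ obj (Q.tgt e)

namespace Rep

variable {Q : TypedQuiver n} {C : Type u} [Category.{v} C]

/-- The composition of the maps of a representation along a path. -/
def mapPath (𝔙 : Q.Rep C) : ∀ {u w : Q.V}, Q.Path u w → (𝔙.obj u ⟶ 𝔙.obj w)
  | _, _, .nil _ => 𝟙 _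
  | _, _, .cons e γ => mapPath 𝔙 γ ≫ 𝔙.map e

end Rep

/-- A weakly linked net over a `ℤⁿ`-quiver. -/
structure IsWeaklyLinked (k : Type) [Field k] {Q : TypedQuiver n} {C : Type u}
    [Category.{v} C] [Preadditive C] [CategoryTheory.Linear k C] (𝔙 : Q.Rep C) : Prop where
  scalar : ∀ (u w : Q.V) (γ₁ γ₂ : Q.Path u w), γ₂.Admissible →
      ∃ c : k, c ≠ 0 ∧ 𝔙.mapPath γ₁ = c • 𝔙.mapPath γ₂
  circuit : ∀ (u w : Q.V) (γ : Q.Path u w), γ.MaximalSimple → 𝔙.mapPath γ = 0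

section Abelian

variable {Q : TypedQuiver n} {C : Type u} [Category.{v} C] [Abelian C]

/-- A linked net: kernels along admissible paths with disjoint essential types meet trivially. -/
def IsLinked (𝔙 : Q.Rep C) : Prop :=
  ∀ (u w x : Q.V) (γ₁ : Q.Path u w) (γ₂ : Q.Path u x), γ₁.Admissible → γ₂.Admissible →
    γ₁.essType ∩ γ₂.essType = ∅ →
    kernelSubobject (𝔙.mapPath γ₁) ⊓ kernelSubobject (𝔙.mapPath γ₂) = ⊥

/-- Exactness: `Ker φ^u_w = Im φ^w_u` for neighboring vertices. -/
def IsExact (𝔙 : Q.Rep C) : Prop :=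
  ∀ (u w : Q.V), Q.Neighbors u w → ∀ (γ : Q.Path u w) (μ : Q.Path w u),
    γ.Admissible → μ.Admissible →
    kernelSubobject (𝔙.mapPath γ) = imageSubobject (𝔙.mapPath μ)

/-- Binary: each associated map is zero or a monomorphism. -/
def IsBinary (𝔙 : Q.Rep C) : Prop :=
  ∀ (u w : Q.V) (γ : Q.Path u w), 𝔙.mapPath γ = 0 ∨ Mono (𝔙.mapPath γ)

/-- Pure: each epimorphism among the associated maps is an isomorphism. -/
def IsPure (𝔙 : Q.Rep C) : Prop :=
  ∀ (u w : Q.V) (γ : Q.Path u w), Epi (𝔙.mapPath γ) → IsIso (𝔙.mapPath γ)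

/-- Locally finite: compositions along long enough arriving paths vanish. -/
def LocallyFinite (𝔙 : Q.Rep C) : Prop :=
  ∀ v : Q.V, ∃ ℓ : ℕ, ∀ (u : Q.V) (γ : Q.Path u v), ℓ < γ.length → 𝔙.mapPath γ = 0

/-- Faithfully generated by a vertex `w`: `φ^w_v` is an isomorphism for every `v`. -/
def FaithfullyGeneratedBy (𝔙 : Q.Rep C) (w : Q.V) : Prop :=
  ∀ (v : Q.V) (γ : Q.Path w v), γ.Admissible → IsIso (𝔙.mapPath γ)

/-- Generated by a set `H`: the images of compositions along paths from `H` to `v` sum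
to the whole object at `v` (stated via upper bounds of subobjects). -/
def GeneratedBy (𝔙 : Q.Rep C) (H : Set Q.V) : Prop :=
  ∀ v : Q.V, ∀ W : Subobject (𝔙.obj v),
    (∀ z ∈ H, ∀ γ : Q.Path z v, imageSubobject (𝔙.mapPath γ) ≤ W) → W = ⊤

/-- 1-generated by a set `H`. -/
def OneGeneratedBy (𝔙 : Q.Rep C) (H : Set Q.V) : Prop :=
  ∀ v : Q.V, ∃ w ∈ H, ∃ γ : Q.Path w v, γ.Admissible ∧ Epi (𝔙.mapPath γ)

/-- A subobject-valued sum being everything, stated via upper bounds. -/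
def SumTop {X : C} (S : Set (Subobject X)) : Prop :=
  ∀ W : Subobject X, (∀ s ∈ S, s ≤ W) → W = ⊤

/-- A primitive vertex for a net: the images of the maps of arrows arriving at `w` do
not sum to the whole object. -/
def Primitive (𝔙 : Q.Rep C) (w : Q.V) : Prop :=
  ¬ SumTop {s : Subobject (𝔙.obj w) | ∃ (e : Q.E) (h : Q.tgt e = w),
      s = imageSubobject (𝔙.map e ≫ eqToHom (congrArg 𝔙.obj h))}

/-- The intersection property at a vertex `v`, where `K v I` denotes `Ker φ^v_I`. -/
def IntersectionProp (𝔙 : Q.Rep C)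
    (K : ∀ v : Q.V, Set (Fin (n + 1)) → Subobject (𝔙.obj v)) (v : Q.V) : Prop :=
  ∀ (m : ℕ) (I : Fin (m + 1) → Set (Fin (n + 1))),
    (Finset.univ.sup fun ℓ : Fin m => K v (I ℓ.succ)) ⊓ K v (I 0)
      = Finset.univ.sup fun ℓ : Fin m => K v (I ℓ.succ ∩ I 0)

end Abelian

section Aux
variable {Q : TypedQuiver n}

lemma count_comp {u w x : Q.V} (γ : Q.Path u w) (δ : Q.Path w x) (t : Fin (n + 1)) :
    (γ.comp δ).count t = γ.count t + δ.count t := by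
  induction δ with
  | nil => simp [Path.comp, Path.count]
  | cons e δ ih => simp only [Path.comp, Path.count, ih]; omega

lemma realize (hout : ∀ (v : Q.V) (t : Fin (n + 1)), ∃ e : Q.E, Q.src e = v ∧ Q.typ e = t)
    (N : ℕ) (f : Fin (n + 1) → ℕ) (hf : Finset.univ.sum f = N) (u : Q.V) :
    ∃ (w : Q.V) (γ : Q.Path u w), ∀ t, γ.count t = f t := by
  induction N generalizing f u with
  | zero =>
    refine ⟨u, .nil u, fun t => ?_⟩
    have := Finset.sum_eq_zero_iff.mp hf t (Finset.mem_univ t)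
    simpa [Path.count] using this.symm
  | succ N ih =>
    have hex : ∃ t, 0 < f t := by
      by_contra h
      push_neg at h
      simp only [Nat.le_zero] at h
      rw [Finset.sum_eq_zero (fun t _ => h t)] at hf
      omega
    obtain ⟨t, ht⟩ := hex
    have hsum : Finset.univ.sum (Function.update f t (f t - 1)) = N := by
      rw [Finset.sum_update_of_mem (Finset.mem_univ t)]
      have h2 : Finset.univ.sum f = f t + ∑ x ∈ Finset.univ \ {t}, f x := by
        rw [Finset.sum_eq_sum_sdiff_singleton_add (Finset.mem_univ t)]; omega
      omega
    obtain ⟨w, γ, hγ⟩ := ih (Function.update f t (f t - 1)) hsum u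
    obtain ⟨e, he, het⟩ := hout w t
    subst he
    refine ⟨Q.tgt e, .cons e γ, fun s => ?_⟩
    by_cases hs : s = t
    · subst hs
      simp [Path.count, hγ s, het, Function.update]
      omega
    · have hts : Q.typ e ≠ s := by rw [het]; exact fun h => hs h.symm
      simp [Path.count, hγ s, Function.update, hs, hts]

lemma main (hout : ∀ (v : Q.V) (t : Fin (n + 1)), ∃ e : Q.E, Q.src e = v ∧ Q.typ e = t)
    (h3 : ∀ (u w : Q.V) (γ : Q.Path u w), γ.MaximalSimple → u = w)
    (h4 : ∀ (u w x : Q.V) (γ : Q.Path u w) (μ : Q.Path u x), γ.Admissible → μ.Admissible →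
        (w = x ↔ γ.count = μ.count)) :
    ∀ {u w : Q.V} (γ : Q.Path u w) (x : Q.V) (σ : Q.Path u x) (m : ℕ),
      σ.Admissible → (∀ t, σ.count t + m = γ.count t) → x = w := by
  intro u w γ
  induction γ with
  | nil =>
    intro x σ m hadm hm
    have h0 : ∀ t, σ.count t = 0 := fun t => by have := hm t; simp [Path.count] at this; omega
    exact ((h4 u x u σ (.nil u) hadm ⟨0, by simp [Path.count]⟩).mpr
      (funext fun t => by simp [Path.count, h0 t]))
  | cons e γ₀ ih =>
    intro x σ m hadm hm
    simp only [Path.count] at hm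
    set g := γ₀.count with hg
    have hne : (Finset.univ : Finset (Fin (n + 1))).Nonempty := Finset.univ_nonempty
    set mg := Finset.univ.inf' hne g with hmg
    have hmg_le : ∀ t, mg ≤ g t := fun t => Finset.inf'_le g (Finset.mem_univ t)
    obtain ⟨tm, -, htm⟩ := Finset.exists_mem_eq_inf' hne g
    obtain ⟨t₀, hσ0⟩ := id hadm
    by_cases hc : ∃ t, t ≠ Q.typ e ∧ g t = mg
    · -- Case 1
      obtain ⟨t₁, ht₁ne, ht₁⟩ := hc
      have hmm : m = mg := by
        have h1 := hm t₁
        have h2 := hm t₀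
        rw [if_neg (Ne.symm ht₁ne)] at h1
        have := hmg_le t₀
        omega
      obtain ⟨y, σ₀, hσ₀⟩ := realize hout _ (fun t => g t - mg) rfl u
      have hσ₀m : ∀ t, σ₀.count t + mg = g t := fun t => by
        rw [hσ₀ t]; have := hmg_le t; omega
      have hσ₀adm : σ₀.Admissible := ⟨t₁, by rw [hσ₀ t₁, ht₁]; omega⟩
      have hy : y = Q.src e := ih y σ₀ mg hσ₀adm hσ₀m
      subst hy
      have hconsadm : (Path.cons e σ₀).Admissible :=
        ⟨t₁, by simp [Path.count, if_neg (Ne.symm ht₁ne)]; rw [hσ₀ t₁, ht₁]; omega⟩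
      have hcnt : (Path.cons e σ₀).count = σ.count := funext fun t => by
        simp only [Path.count]
        have := hm t; have := hσ₀m t; omega
      exact ((h4 u _ x (.cons e σ₀) σ hconsadm hadm).mpr hcnt).symm
    · -- Case 2
      push_neg at hc
      have htme : tm = Q.typ e := by
        by_contra h
        exact hc tm h htm.symm
      have hgte : g (Q.typ e) = mg := by rw [← htme, ← htm]
      have hge : ∀ t, t ≠ Q.typ e → mg + 1 ≤ g t := fun t ht =>
        Nat.lt_of_le_of_ne (hmg_le t) (fun h => hc t ht h.symm)
      have hmm : m = mg + 1 := by
        have h1 := hm t₀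
        have h2 := hm (Q.typ e)
        rw [if_pos rfl] at h2
        by_cases ht0 : t₀ = Q.typ e
        · subst ht0; omega
        · rw [if_neg (Ne.symm ht0)] at h1
          have := hge t₀ ht0
          omega
      have hσe : σ.count (Q.typ e) = 0 := by
        have h2 := hm (Q.typ e); rw [if_pos rfl] at h2; omega
      obtain ⟨z, π, hπ⟩ := realize hout _ (fun s => if s = Q.typ e then 0 else 1) rfl x
      have hzadm : (σ.comp π).Admissible :=
        ⟨Q.typ e, by rw [count_comp, hπ]; simp [hσe]⟩
      have hzm : ∀ t, (σ.comp π).count t + mg = g t := fun t => by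
        rw [count_comp, hπ]
        by_cases ht : t = Q.typ e
        · subst ht; simp [hσe, hgte]
        · rw [if_neg ht]
          have h1 := hm t
          rw [if_neg (Ne.symm ht)] at h1
          omega
      have hz : z = Q.src e := ih z (σ.comp π) mg hzadm hzm
      subst hz
      have hms : (Path.cons e π).MaximalSimple := fun t => by
        simp only [Path.count, hπ]
        by_cases ht : t = Q.typ e
        · subst ht; simp
        · simp [if_neg ht, if_neg (Ne.symm ht)]
      exact h3 x (Q.tgt e) (.cons e π) hms

end Aux


end TypedQuiver
open TypedQuiver in
/-- For a quiver with a nontrivial partition of its arrows into `n+1` types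
(`n > 0`) with an arrow of each type leaving each vertex, properties (3) every maximal
simple path is a circuit and (4) two admissible paths leaving the same vertex arrive at
the same vertex iff they have the same type, together are equivalent to (3'): two paths
leaving the same vertex arrive at the same vertex iff the difference of the numbers of
arrows of each type is independent of the type. -/
theorem stmt1 {n : ℕ} (hn : 0 < n) (Q : TypedQuiver n) (hne : Nonempty Q.V)
    (hout : ∀ (v : Q.V) (t : Fin (n + 1)), ∃ e : Q.E, Q.src e = v ∧ Q.typ e = t) :
    ((∀ (u w : Q.V) (γ : Q.Path u w), γ.MaximalSimple → u = w) ∧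
      (∀ (u w x : Q.V) (γ : Q.Path u w) (μ : Q.Path u x), γ.Admissible → μ.Admissible →
        (w = x ↔ γ.count = μ.count)))
    ↔ (∀ (u w x : Q.V) (γ : Q.Path u w) (μ : Q.Path u x),
        (w = x ↔ ∃ c : ℤ, ∀ t, (γ.count t : ℤ) - μ.count t = c)) := by
  constructor
  · rintro ⟨h3, h4⟩ u w x γ μ
    have hneF : (Finset.univ : Finset (Fin (n + 1))).Nonempty := Finset.univ_nonempty
    set mγ := Finset.univ.inf' hneF γ.count with hmγ
    set mμ := Finset.univ.inf' hneF μ.count with hmμ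
    obtain ⟨tγ, -, htγ⟩ := Finset.exists_mem_eq_inf' hneF γ.count
    obtain ⟨tμ, -, htμ⟩ := Finset.exists_mem_eq_inf' hneF μ.count
    have hγle : ∀ t, mγ ≤ γ.count t := fun t => Finset.inf'_le _ (Finset.mem_univ t)
    have hμle : ∀ t, mμ ≤ μ.count t := fun t => Finset.inf'_le _ (Finset.mem_univ t)
    obtain ⟨y, σ, hσ⟩ := realize hout _ (fun t => γ.count t - mγ) rfl u
    have hσm : ∀ t, σ.count t + mγ = γ.count t := fun t => by
      rw [hσ t]; have := hγle t; omega
    have hσadm : σ.Admissible := ⟨tγ, by rw [hσ tγ, ← htγ]; omega⟩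
    have hyw : y = w := main hout h3 h4 γ y σ mγ hσadm hσm
    constructor
    · intro hwx
      obtain ⟨y', τ, hτ⟩ := realize hout _ (fun t => μ.count t - mμ) rfl u
      have hτm : ∀ t, τ.count t + mμ = μ.count t := fun t => by
        rw [hτ t]; have := hμle t; omega
      have hτadm : τ.Admissible := ⟨tμ, by rw [hτ tμ, ← htμ]; omega⟩
      have hyx : y' = x := main hout h3 h4 μ y' τ mμ hτadm hτm
      have hyy : y = y' := by rw [hyw, hyx, hwx]
      have hcnt : σ.count = τ.count := (h4 u y y' σ τ hσadm hτadm).mp hyy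
      refine ⟨(mγ : ℤ) - mμ, fun t => ?_⟩
      have h1 := hσm t
      have h2 := hτm t
      have h3' : σ.count t = τ.count t := congrFun hcnt t
      push_cast
      omega
    · rintro ⟨c, hc⟩
      have hc0 := hc tγ
      have hcle : c ≤ (mγ : ℤ) := by rw [← htγ] at hc0; omega
      set m' := ((mγ : ℤ) - c).toNat with hm'
      have hm'c : (m' : ℤ) = (mγ : ℤ) - c := Int.toNat_of_nonneg (by omega)
      have hσμ : ∀ t, σ.count t + m' = μ.count t := fun t => by
        have h1 := hσm t
        have h2 := hc t
        omega
      have : y = x := main hout h3 h4 μ y σ m' hσadm hσμ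
      rw [← hyw, this]
  · intro h3'
    constructor
    · intro u w γ hms
      exact ((h3' u w u γ (.nil u)).mpr ⟨1, fun t => by simp [hms t, Path.count]⟩).symm
    · intro u w x γ μ hγ hμ
      constructor
      · intro hwx
        obtain ⟨c, hc⟩ := (h3' u w x γ μ).mp hwx
        obtain ⟨t₀, h₀⟩ := hγ
        obtain ⟨t₁, h₁⟩ := hμ
        funext t
        have hct := hc t
        have hc0 := hc t₀
        have hc1 := hc t₁
        rw [h₀] at hc0
        rw [h₁] at hc1
        omega
      · intro hcnt
        exact (h3' u w x γ μ).mpr ⟨0, fun t => by rw [congrFun hcnt t]; simp⟩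
end

section
/- In the standard Z^n-quiver with vertex set Z^n, where for i=1,…,n the type-i arrows are translations by the standard basis vector e_i and type-0 arrows are translations by (−1,…,−1): given vertices z_0,…,z_m and sets of arrow types I_0,…,I_m with empty total intersection, the intersection of the cones C_{I_j}(z_j) is finite, where C_I(z) is the set of endpoints of paths leaving z using only arrow types in I. -/
open CategoryTheory CategoryTheory.Limits

universe u v

/-- The displacement vector of an arrow of type `t` in the standard `ℤⁿ`-quiver:
type `0` is translation by `(−1,…,−1)`, and type `i+1` is translation by `eᵢ`. -/
def stdStep (n : ℕ) (t : Fin (n + 1)) : Fin n → ℤ :=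
  if t = 0 then (fun _ => -1) else fun j => if (t : ℕ) = (j : ℕ) + 1 then 1 else 0

/-- The standard `ℤⁿ`-quiver on the vertex set `ℤⁿ`. -/
def stdQuiver (n : ℕ) : TypedQuiver n where
  V := Fin n → ℤ
  E := (Fin n → ℤ) × Fin (n + 1)
  src e := e.1
  tgt e := e.1 + stdStep n e.2
  typ e := e.2

/-- The `I`-cone of `z`: endpoints of paths leaving `z` using only arrow types in `I`. -/
def cone {n : ℕ} (I : Set (Fin (n + 1))) (z : Fin n → ℤ) : Set (Fin n → ℤ) :=
  {x | ∃ γ : (stdQuiver n).Path z x, ∀ t, t ∉ I → γ.count t = 0}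

/-!
Along a path of the standard quiver, coordinate `i` changes by the number of type-`(i+1)`
arrows minus the number of type-`0` arrows. Hence a cone whose type set omits `0` lies
above its apex, and one omitting `i+1` lies below its apex in coordinate `i`. As every
arrow type is omitted by some `I j`, the intersection of the cones lies in a bounded box.
-/

lemma TypedQuiver.Path.eq_add_sum_count_smul {n : ℕ} {Q : TypedQuiver n} {M : Type*}
    [AddCommMonoid M] (f : Q.V → M) (w : Fin (n + 1) → M)
    (hf : ∀ e, f (Q.tgt e) = f (Q.src e) + w (Q.typ e)) {z x : Q.V} (γ : Q.Path z x) :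
    f x = f z + ∑ t, γ.count t • w t := by
  induction γ with
  | nil => simp [TypedQuiver.Path.count]
  | cons e γ ih =>
    simp only [hf, ih, TypedQuiver.Path.count, add_smul, Finset.sum_add_distrib, ite_smul,
      one_smul, zero_smul, Finset.sum_ite_eq, Finset.mem_univ, if_true, add_assoc]

lemma stdStep_apply {n : ℕ} (t : Fin (n + 1)) (i : Fin n) :
    stdStep n t i = (if t = i.succ then 1 else 0) - (if t = 0 then 1 else 0) := by
  rcases Fin.eq_zero_or_eq_succ t with rfl | ⟨j, rfl⟩
  · simp [stdStep, (Fin.succ_ne_zero i).symm]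
  · simp [stdStep, Fin.ext_iff, eq_comm]

lemma stdQuiver_path_apply {n : ℕ} {z x : Fin n → ℤ} (γ : (stdQuiver n).Path z x)
    (i : Fin n) : x i = z i + γ.count i.succ - γ.count 0 := by
  rw [γ.eq_add_sum_count_smul (fun v : Fin n → ℤ => v i) (fun t => stdStep n t i)
    fun _ => rfl]
  simp [stdStep_apply, mul_sub, Finset.sum_sub_distrib, add_sub_assoc]

lemma le_of_mem_cone {n : ℕ} {I : Set (Fin (n + 1))} {z x : Fin n → ℤ} (h0 : 0 ∉ I)
    (hx : x ∈ cone I z) : z ≤ x := by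
  obtain ⟨γ, hγ⟩ := hx
  intro i
  have hxi := stdQuiver_path_apply γ i
  rw [hγ 0 h0] at hxi
  show z i ≤ x i
  omega

lemma apply_le_of_mem_cone {n : ℕ} {I : Set (Fin (n + 1))} {z x : Fin n → ℤ} {i : Fin n}
    (hi : i.succ ∉ I) (hx : x ∈ cone I z) : x i ≤ z i := by
  obtain ⟨γ, hγ⟩ := hx
  have hxi := stdQuiver_path_apply γ i
  rw [hγ i.succ hi] at hxi
  omega

/-- In the standard `ℤⁿ`-quiver, given vertices `z₀,…,z_m` and sets of
arrow types `I₀,…,I_m` with empty total intersection, the intersection of the cones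
`C_{I_j}(z_j)` is finite. -/
theorem stmt3 (n m : ℕ) (z : Fin (m + 1) → (Fin n → ℤ))
    (I : Fin (m + 1) → Set (Fin (n + 1))) (hI : (⋂ j, I j) = ∅) :
    (⋂ j, cone (I j) (z j)).Finite := by
  have each_type_omitted : ∀ t, ∃ j, t ∉ I j := by
    simpa [Set.eq_empty_iff_forall_notMem] using hI
  choose j hj using each_type_omitted
  refine (Set.finite_Icc (z (j 0)) fun i => z (j i.succ) i).subset fun x hx => ?_
  rw [Set.mem_iInter] at hx
  exact ⟨le_of_mem_cone (hj 0) (hx _), fun i => apply_le_of_mem_cone (hj i.succ) (hx _)⟩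
end

section
/- Let Q be a Z^n-quiver and H a nonempty finite set of vertices. Then the hull P(H) is finite, H ⊆ P(H), and P(P(H)) = P(H). -/
open CategoryTheory CategoryTheory.Limits

universe u v

namespace TypedQuiver

namespace HullAux

variable {n : ℕ} {Q : TypedQuiver n}

theorem count_comp {u w x : Q.V} (γ : Q.Path u w) (δ : Q.Path w x) (t : Fin (n + 1)) :
    (γ.comp δ).count t = γ.count t + δ.count t := by
  induction δ with
  | nil => simp [Path.comp, Path.count]
  | cons e δ ih => simp [Path.comp, Path.count, ih]; omega

/-- Cast the target of a path along an equality. -/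
def Path.castTgt {u w w' : Q.V} (h : w = w') (γ : Q.Path u w) : Q.Path u w' := h ▸ γ

theorem count_castTgt {u w w' : Q.V} (h : w = w') (γ : Q.Path u w) (t : Fin (n + 1)) :
    (Path.castTgt h γ).count t = γ.count t := by subst h; rfl

/-- The unique arrow of type `t` leaving `v`. -/
noncomputable def stepE (hQ : Q.IsZn) (t : Fin (n + 1)) (v : Q.V) : Q.E :=
  (hQ.unique_out v t).exists.choose

theorem src_stepE (hQ : Q.IsZn) (t : Fin (n + 1)) (v : Q.V) : Q.src (stepE hQ t v) = v :=
  (hQ.unique_out v t).exists.choose_spec.1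

theorem typ_stepE (hQ : Q.IsZn) (t : Fin (n + 1)) (v : Q.V) : Q.typ (stepE hQ t v) = t :=
  (hQ.unique_out v t).exists.choose_spec.2

/-- Following the unique arrow of type `t` from `v`. -/
noncomputable def step (hQ : Q.IsZn) (t : Fin (n + 1)) (v : Q.V) : Q.V :=
  Q.tgt (stepE hQ t v)

/-- Walking a list of arrow types from a vertex. -/
noncomputable def walk (hQ : Q.IsZn) (l : List (Fin (n + 1))) (v : Q.V) : Q.V :=
  l.foldl (fun v t => step hQ t v) v

theorem walk_append (hQ : Q.IsZn) (l l' : List (Fin (n + 1))) (v : Q.V) :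
    walk hQ (l ++ l') v = walk hQ l' (walk hQ l v) :=
  List.foldl_append ..

theorem exists_path_walk (hQ : Q.IsZn) (l : List (Fin (n + 1))) (v : Q.V) :
    ∃ γ : Q.Path v (walk hQ l v), ∀ t, γ.count t = l.count t := by
  induction l generalizing v with
  | nil => exact ⟨.nil v, fun t => by
    have h0 : ∀ w : Q.V, (Path.nil w : Q.Path w w).count t = 0 := fun w => by simp [Path.count]
    exact h0 v⟩
  | cons a l ih =>
    obtain ⟨γ, hγ⟩ := ih (step hQ a v)
    refine ⟨Path.comp
      (Path.cons (stepE hQ a v) (Path.castTgt (src_stepE hQ a v).symm (Path.nil v))) γ, ?_⟩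
    intro t
    refine (count_comp _ _ t).trans ?_
    refine (congrArg (_ + ·) (hγ t)).trans ?_
    by_cases hat : a = t <;>
        simp [Path.count, count_castTgt, typ_stepE, List.count_cons, hat] <;>
      omega

theorem path_eq_walk (hQ : Q.IsZn) : ∀ {u w : Q.V} (γ : Q.Path u w),
    ∃ l : List (Fin (n + 1)), w = walk hQ l u ∧ ∀ t, γ.count t = l.count t := by
  intro u w γ
  induction γ with
  | nil => exact ⟨[], rfl, fun t => by simp [Path.count]⟩
  | cons e γ ih =>
    obtain ⟨l, hl, hc⟩ := ih
    have he : e = stepE hQ (Q.typ e) (Q.src e) :=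
      ((hQ.unique_out (Q.src e) (Q.typ e)).unique ⟨rfl, rfl⟩
        ⟨src_stepE hQ _ _, typ_stepE hQ _ _⟩)
    refine ⟨l ++ [Q.typ e], ?_, ?_⟩
    · rw [walk_append, ← hl]
      show Q.tgt e = Q.tgt (stepE hQ (Q.typ e) (Q.src e))
      rw [← he]
    · intro t
      simp only [Path.count, List.count_append, hc t]
      by_cases het : Q.typ e = t <;> simp [List.count_cons, het] <;> omega

theorem step_comm (hQ : Q.IsZn) (x y : Fin (n + 1)) (v : Q.V) :
    step hQ x (step hQ y v) = step hQ y (step hQ x v) := by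
  rcases eq_or_ne x y with rfl | hxy
  · rfl
  obtain ⟨γ, hγ⟩ := exists_path_walk hQ [y, x] v
  obtain ⟨μ, hμ⟩ := exists_path_walk hQ [x, y] v
  have hcnt : ∀ t, List.count t [y, x] = List.count t [x, y] := by
    intro t; simp [List.count_cons]; omega
  by_cases h : ∃ t, List.count t [y, x] = 0
  · obtain ⟨t, ht⟩ := h
    have h1 : γ.Admissible := ⟨t, by rw [hγ]; exact ht⟩
    have h2 : μ.Admissible := ⟨t, by rw [hμ, ← hcnt]; exact ht⟩
    exact (hQ.same_type v _ _ γ μ h1 h2).2 (funext fun t => by rw [hγ, hμ, hcnt])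
  · push_neg at h
    have hone : ∀ t, List.count t [y, x] = 1 := by
      intro t
      have h2 := h t
      have : List.count t [y, x] = (if y = t then 1 else 0) + (if x = t then 1 else 0) := by
        simp [List.count_cons]; omega
      rw [this] at h2 ⊢
      by_cases hy : y = t <;> by_cases hx : x = t <;> simp_all
    have e1 := hQ.circuit v _ γ (fun t => by rw [hγ]; exact hone t)
    have e2 := hQ.circuit v _ μ (fun t => by rw [hμ, ← hcnt]; exact hone t)
    exact e1.symm.trans e2

theorem walk_perm (hQ : Q.IsZn) {l l' : List (Fin (n + 1))} (h : l.Perm l') (v : Q.V) :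
    walk hQ l v = walk hQ l' v := by
  induction h generalizing v with
  | nil => rfl
  | cons a _ ih => exact ih _
  | swap a b l =>
    show walk hQ l (step hQ a (step hQ b v)) = walk hQ l (step hQ b (step hQ a v))
    rw [step_comm]
  | trans _ _ ih1 ih2 => exact (ih1 v).trans (ih2 v)

theorem walk_count_eq (hQ : Q.IsZn) {l l' : List (Fin (n + 1))}
    (h : ∀ t, l.count t = l'.count t) (v : Q.V) : walk hQ l v = walk hQ l' v :=
  walk_perm hQ (List.perm_iff_count.mpr h) v

theorem count_finRange (t : Fin (n + 1)) : (List.finRange (n + 1)).count t = 1 :=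
  List.count_eq_one_of_mem (List.nodup_finRange _) (List.mem_finRange t)

theorem walk_finRange (hQ : Q.IsZn) (v : Q.V) : walk hQ (List.finRange (n + 1)) v = v := by
  obtain ⟨γ, hγ⟩ := exists_path_walk hQ (List.finRange (n + 1)) v
  exact (hQ.circuit v _ γ (fun t => by rw [hγ]; exact count_finRange t)).symm

theorem exists_reduced (hQ : Q.IsZn) (l : List (Fin (n + 1))) (v : Q.V) :
    ∃ l' : List (Fin (n + 1)), walk hQ l' v = walk hQ l v ∧ (∃ t, l'.count t = 0) ∧
      ∀ t, l'.count t ≤ l.count t := by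
  by_cases h : ∃ t, l.count t = 0
  · exact ⟨l, rfl, h, fun t => le_refl _⟩
  · push_neg at h
    set F := List.finRange (n + 1) with hF
    have hperm : List.Perm (F ++ l.diff F) l :=
      List.subperm_append_diff_self_of_count_le (fun x _ => by
        rw [count_finRange]; exact Nat.one_le_iff_ne_zero.mpr (h x))
    have hc : ∀ t, (l.diff F).count t = l.count t - 1 := by
      intro t
      have := hperm.count_eq t
      rw [List.count_append, count_finRange] at this
      omega
    have hlen : (l.diff F).length < l.length := by
      have := hperm.length_eq
      rw [List.length_append, List.length_finRange] at this
      omega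
    obtain ⟨l', h1, h2, h3⟩ := exists_reduced hQ (l.diff F) v
    refine ⟨l', ?_, h2, fun t => le_trans (h3 t) (by rw [hc t]; omega)⟩
    rw [h1, ← walk_perm hQ hperm v, walk_append, walk_finRange]
termination_by l.length

theorem count_eq_of_walk_eq (hQ : Q.IsZn) {l l' : List (Fin (n + 1))} {v : Q.V}
    (hl : ∃ t, l.count t = 0) (hl' : ∃ t, l'.count t = 0)
    (h : walk hQ l v = walk hQ l' v) : ∀ t, l.count t = l'.count t := by
  obtain ⟨γ, hγ⟩ := exists_path_walk hQ l v
  obtain ⟨μ, hμ⟩ := exists_path_walk hQ l' v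
  obtain ⟨t0, ht0⟩ := hl
  obtain ⟨t1, ht1⟩ := hl'
  have := (hQ.same_type v _ _ γ μ ⟨t0, by rw [hγ]; exact ht0⟩
    ⟨t1, by rw [hμ]; exact ht1⟩).1 h
  intro t
  rw [← hγ, ← hμ, this]

theorem hull_finite (hQ : Q.IsZn) (H : Set Q.V) (hne : H.Nonempty) (hfin : H.Finite) :
    (hull Q H).Finite := by
  classical
  obtain ⟨z₀, hz₀⟩ := hne
  have hL : ∀ v : Q.V, ∃ l : List (Fin (n + 1)),
      walk hQ l z₀ = v ∧ ∃ t, l.count t = 0 := by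
    intro v
    obtain ⟨γ, t, ht⟩ := hQ.connected z₀ v
    obtain ⟨l, hl, hcount⟩ := path_eq_walk hQ γ
    exact ⟨l, hl.symm, t, by rw [← hcount]; exact ht⟩
  choose L hLw hLa using hL
  set M : ℕ := hfin.toFinset.sup fun z => Finset.univ.sup fun t => (L z).count t with hM
  have key : ∀ v ∈ hull Q H, ∀ t, (L v).count t ≤ M := by
    intro v hv t
    obtain ⟨z, hz, γ, hγt⟩ := hv t
    obtain ⟨lγ, hlγ, hcγ⟩ := path_eq_walk hQ γ
    have hdw : walk hQ (L z ++ lγ) z₀ = v := by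
      rw [walk_append, hLw z, ← hlγ]
    obtain ⟨l', hw', hadm', hle'⟩ := exists_reduced hQ (L z ++ lγ) z₀
    have hcnt := count_eq_of_walk_eq hQ (hLa v) hadm'
      (by rw [hLw v, hw', hdw])
    calc (L v).count t = l'.count t := hcnt t
      _ ≤ (L z ++ lγ).count t := hle' t
      _ = (L z).count t + lγ.count t := List.count_append
      _ = (L z).count t := by rw [← hcγ t, hγt, Nat.add_zero]
      _ ≤ M := by
          have h1 : (L z).count t ≤ Finset.univ.sup fun s => (L z).count s :=
            Finset.le_sup (f := fun s => (L z).count s) (Finset.mem_univ t)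
          have h2 : (Finset.univ.sup fun s => (L z).count s) ≤ M :=
            Finset.le_sup (f := fun z => Finset.univ.sup fun t => (L z).count t)
              (hfin.mem_toFinset.mpr hz)
          exact le_trans h1 h2
  have hinj : Set.InjOn (fun v => fun t => (L v).count t) (hull Q H) := by
    intro a _ b _ hab
    have : walk hQ (L a) z₀ = walk hQ (L b) z₀ :=
      walk_count_eq hQ (fun t => congrFun hab t) z₀
    rw [hLw a, hLw b] at this
    exact this
  apply Set.Finite.of_finite_image ?_ hinj
  refine Set.Finite.subset (Set.Finite.pi (fun _ : Fin (n + 1) => Set.finite_Iic M)) ?_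
  rintro _ ⟨v, hv, rfl⟩
  intro t _
  exact key v hv t

end HullAux

end TypedQuiver

open TypedQuiver in
/-- For a nonempty finite set `H` of vertices of a `ℤⁿ`-quiver, the hull
`P(H)` is finite, contains `H`, and is idempotent: `P(P(H)) = P(H)`. -/
theorem stmt4 {n : ℕ} (Q : TypedQuiver n) (hQ : Q.IsZn) (H : Set Q.V)
    (hne : H.Nonempty) (hfin : H.Finite) :
    (hull Q H).Finite ∧ H ⊆ hull Q H ∧ hull Q (hull Q H) = hull Q H := by
  classical
  have hsub : ∀ S : Set Q.V, S ⊆ hull Q S := by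
    intro S v hv t
    exact ⟨v, hv, .nil v, by simp [TypedQuiver.Path.count]⟩
  refine ⟨HullAux.hull_finite hQ H hne hfin, hsub H, ?_⟩
  apply Set.Subset.antisymm ?_ (hsub (hull Q H))
  intro v hv t
  obtain ⟨z, hz, γ, hγ⟩ := hv t
  obtain ⟨z', hz', δ, hδ⟩ := hz t
  exact ⟨z', hz', δ.comp γ, by rw [HullAux.count_comp, hδ, hγ]⟩
end

section
/- Let u, v, w be vertices of a Z^n-quiver. The following are equivalent: (1) there is an admissible path from u to w passing through v; (2) the concatenation of every admissible path from u to v with every admissible path from v to w is admissible. Moreover these imply: (3) if v ≠ w then no path from u to v through w is admissible, and (4) if u ≠ v then no path from v to w through u is admissible. If v and w are neighbors, (3) is equivalent to (1); if u and v are neighbors, (4) is equivalent to (1). -/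
open CategoryTheory CategoryTheory.Limits

universe u v

/-!
In a `ℤⁿ`-quiver an admissible path is determined, among admissible paths from its source,
by its vector of arrow-type counts; so (1)–(4) reduce to arithmetic on count vectors. For the
converses, a simple path `σ` is closed up to a circuit by any path with count vector `1 - σ`,
and an admissible path can be split at any smaller count vector.
-/

namespace TypedQuiver

variable {n : ℕ} {Q : TypedQuiver n}

namespace Path

@[simp]
theorem count_comp {u w x : Q.V} (γ : Q.Path u w) (δ : Q.Path w x) (t : Fin (n + 1)) :
    (γ.comp δ).count t = γ.count t + δ.count t := by
  induction δ with
  | nil => simp [comp, count]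
  | cons e δ ih => simp only [comp, count, ih]; omega

@[simp]
theorem count_nil (v : Q.V) (t : Fin (n + 1)) : (nil v).count t = 0 := by
  simp [count]

theorem Admissible.of_comp_left {u w x : Q.V} {γ : Q.Path u w} {δ : Q.Path w x}
    (h : (γ.comp δ).Admissible) : γ.Admissible :=
  let ⟨t, ht⟩ := h; ⟨t, by rw [count_comp] at ht; omega⟩

theorem Admissible.of_comp_right {u w x : Q.V} {γ : Q.Path u w} {δ : Q.Path w x}
    (h : (γ.comp δ).Admissible) : δ.Admissible :=
  let ⟨t, ht⟩ := h; ⟨t, by rw [count_comp] at ht; omega⟩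

end Path

namespace IsZn

variable (hQ : Q.IsZn)
include hQ

theorem count_eq_of_admissible {u w : Q.V} {γ δ : Q.Path u w} (hγ : γ.Admissible)
    (hδ : δ.Admissible) : γ.count = δ.count :=
  (hQ.same_type u w w γ δ hγ hδ).mp rfl

theorem eq_of_count_eq_zero {u w : Q.V} (γ : Q.Path u w) (h : ∀ t, γ.count t = 0) : u = w :=
  ((hQ.same_type u w u γ (.nil u) ⟨0, h 0⟩ ⟨0, Path.count_nil u 0⟩).mpr
    (funext fun t => by rw [h, Path.count_nil])).symm

theorem eq_of_count_add_eq_one {u w x : Q.V} (γ : Q.Path u w) (δ : Q.Path w x)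
    (h : ∀ t, γ.count t + δ.count t = 1) : u = x :=
  hQ.circuit u x (γ.comp δ) fun t => by rw [Path.count_comp, h]

theorem exists_path_count_eq_multiset_count (u : Q.V) (m : Multiset (Fin (n + 1))) :
    ∃ (x : Q.V) (γ : Q.Path u x), ∀ t, γ.count t = m.count t := by
  induction m using Multiset.induction_on with
  | empty => exact ⟨u, .nil u, fun t => by simp⟩
  | cons s m ih =>
    obtain ⟨x, γ, hγ⟩ := ih
    obtain ⟨e, rfl, hs⟩ := (hQ.unique_out x s).exists
    refine ⟨Q.tgt e, .cons e γ, fun t => ?_⟩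
    simp only [Path.count, hγ, Multiset.count_cons, hs, eq_comm]

theorem exists_path_count_eq (u : Q.V) (c : Fin (n + 1) → ℕ) :
    ∃ (x : Q.V) (γ : Q.Path u x), ∀ t, γ.count t = c t := by
  obtain ⟨x, γ, hγ⟩ := hQ.exists_path_count_eq_multiset_count u
    (∑ s, Multiset.replicate (c s) s)
  exact ⟨x, γ, fun t => by simp [hγ, Multiset.count_sum', Multiset.count_replicate]⟩

theorem exists_split_of_count_le {u w : Q.V} {γ : Q.Path u w} (hγ : γ.Admissible)
    (c : Fin (n + 1) → ℕ) (hc : ∀ t, c t ≤ γ.count t) :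
    ∃ (x : Q.V) (p : Q.Path u x) (q : Q.Path x w),
      (∀ t, p.count t = c t) ∧ ∀ t, p.count t + q.count t = γ.count t := by
  obtain ⟨x, p, hp⟩ := hQ.exists_path_count_eq u c
  obtain ⟨y, q, hq⟩ := hQ.exists_path_count_eq x fun t => γ.count t - c t
  have hpq : (p.comp q).count = γ.count := funext fun t => by
    simp only [Path.count_comp, hp, hq]; have := hc t; omega
  obtain ⟨t₀, ht₀⟩ := hγ
  obtain rfl : y = w :=
    (hQ.same_type u y w (p.comp q) γ ⟨t₀, by rw [hpq, ht₀]⟩ ⟨t₀, ht₀⟩).mpr hpq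
  exact ⟨x, p, q, hp, fun t => by rw [← Path.count_comp, hpq]⟩

theorem admissible_comp_of_admissible_comp {u v w : Q.V} {γ₁ δ₁ : Q.Path u v}
    {γ₂ δ₂ : Q.Path v w} (h : (γ₁.comp γ₂).Admissible) (hδ₁ : δ₁.Admissible)
    (hδ₂ : δ₂.Admissible) : (δ₁.comp δ₂).Admissible := by
  have e₁ := hQ.count_eq_of_admissible h.of_comp_left hδ₁
  have e₂ := hQ.count_eq_of_admissible h.of_comp_right hδ₂
  obtain ⟨t, ht⟩ := h
  exact ⟨t, by rw [Path.count_comp, ← congrFun e₁ t, ← congrFun e₂ t, ← Path.count_comp, ht]⟩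

theorem not_admissible_comp_target_source {u v w : Q.V} {γ₁ : Q.Path u v} {γ₂ : Q.Path v w}
    (h : (γ₁.comp γ₂).Admissible) (hvw : v ≠ w) (γ : Q.Path u w) (μ : Q.Path w v) :
    ¬ (γ.comp μ).Admissible := by
  intro hγμ
  have e₁ := hQ.count_eq_of_admissible hγμ.of_comp_left h
  have e₂ := hQ.count_eq_of_admissible h.of_comp_left hγμ
  refine hvw (hQ.eq_of_count_eq_zero γ₂ fun t => ?_)
  have h₁ := congrFun e₁ t
  have h₂ := congrFun e₂ t
  simp only [Path.count_comp] at h₁ h₂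
  omega

theorem not_admissible_comp_source_target {u v w : Q.V} {γ₁ : Q.Path u v} {γ₂ : Q.Path v w}
    (h : (γ₁.comp γ₂).Admissible) (huv : u ≠ v) (γ : Q.Path v u) (μ : Q.Path u w) :
    ¬ (γ.comp μ).Admissible := by
  intro hγμ
  have e₁ := hQ.count_eq_of_admissible hγμ.of_comp_right h
  have e₂ := hQ.count_eq_of_admissible h.of_comp_right hγμ
  refine huv (hQ.eq_of_count_eq_zero γ₁ fun t => ?_)
  have h₁ := congrFun e₁ t
  have h₂ := congrFun e₂ t
  simp only [Path.count_comp] at h₁ h₂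
  omega

theorem exists_admissible_comp_target_source_of_simple {u v w : Q.V} {α : Q.Path u v}
    (hα : α.Admissible) {σ : Q.Path v w} (hσ : σ.Simple) (h : ¬ (α.comp σ).Admissible) :
    ∃ (γ : Q.Path u w) (μ : Q.Path w v), (γ.comp μ).Admissible := by
  have hcover : ∀ t, 1 ≤ α.count t + σ.count t := fun t => by
    by_contra
    exact h ⟨t, by rw [Path.count_comp]; omega⟩
  obtain ⟨x, p, q, hp, hpq⟩ :=
    hQ.exists_split_of_count_le hα (fun t => α.count t + σ.count t - 1) fun t => by
      have := hσ t; omega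
  obtain rfl : x = w := hQ.eq_of_count_add_eq_one q σ fun t => by
    have := hpq t; have := hp t; have := hσ t; have := hcover t; omega
  obtain ⟨t₀, ht₀⟩ := hα
  exact ⟨p, q, t₀, by rw [Path.count_comp, hpq, ht₀]⟩

theorem exists_admissible_comp_source_target_of_simple {u v w : Q.V} {σ : Q.Path u v}
    (hσ : σ.Simple) {γ : Q.Path v w} (hγ : γ.Admissible) (h : ¬ (σ.comp γ).Admissible) :
    ∃ (τ : Q.Path v u) (μ : Q.Path u w), (τ.comp μ).Admissible := by
  have hcover : ∀ t, 1 ≤ σ.count t + γ.count t := fun t => by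
    by_contra
    exact h ⟨t, by rw [Path.count_comp]; omega⟩
  obtain ⟨x, p, q, hp, hpq⟩ :=
    hQ.exists_split_of_count_le hγ (fun t => 1 - σ.count t) fun t => by
      have := hcover t; omega
  obtain rfl : u = x := hQ.eq_of_count_add_eq_one σ p fun t => by
    have := hσ t; have := hp t; omega
  obtain ⟨t₀, ht₀⟩ := hγ
  exact ⟨p, q, t₀, by rw [Path.count_comp, hpq, ht₀]⟩

end IsZn

end TypedQuiver

open TypedQuiver in
/-- For vertices `u, v, w` of a `ℤⁿ`-quiver: (1) existence of an admissible
path from `u` to `w` through `v` is equivalent to (2) every concatenation of admissible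
paths `u → v` and `v → w` being admissible; these imply (3) if `v ≠ w` no path from `u`
to `v` through `w` is admissible, and (4) if `u ≠ v` no path from `v` to `w` through `u`
is admissible. If `v` and `w` are neighbors, (3) is equivalent to (1); if `u` and `v`
are neighbors, (4) is equivalent to (1). -/
theorem stmt6 {n : ℕ} (Q : TypedQuiver n) (hQ : Q.IsZn) (u v w : Q.V) :
    ((∃ (γ₁ : Q.Path u v) (γ₂ : Q.Path v w), (γ₁.comp γ₂).Admissible) ↔
      (∀ (γ₁ : Q.Path u v) (γ₂ : Q.Path v w), γ₁.Admissible → γ₂.Admissible →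
        (γ₁.comp γ₂).Admissible)) ∧
    ((∃ (γ₁ : Q.Path u v) (γ₂ : Q.Path v w), (γ₁.comp γ₂).Admissible) →
      ((v ≠ w → ∀ (γ : Q.Path u w) (μ : Q.Path w v), ¬ (γ.comp μ).Admissible) ∧
       (u ≠ v → ∀ (γ : Q.Path v u) (μ : Q.Path u w), ¬ (γ.comp μ).Admissible))) ∧
    (Q.Neighbors v w →
      ((v ≠ w → ∀ (γ : Q.Path u w) (μ : Q.Path w v), ¬ (γ.comp μ).Admissible) ↔
        (∃ (γ₁ : Q.Path u v) (γ₂ : Q.Path v w), (γ₁.comp γ₂).Admissible))) ∧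
    (Q.Neighbors u v →
      ((u ≠ v → ∀ (γ : Q.Path v u) (μ : Q.Path u w), ¬ (γ.comp μ).Admissible) ↔
        (∃ (γ₁ : Q.Path u v) (γ₂ : Q.Path v w), (γ₁.comp γ₂).Admissible))) := by
  have h134 : (∃ (γ₁ : Q.Path u v) (γ₂ : Q.Path v w), (γ₁.comp γ₂).Admissible) →
      (v ≠ w → ∀ (γ : Q.Path u w) (μ : Q.Path w v), ¬ (γ.comp μ).Admissible) ∧
      (u ≠ v → ∀ (γ : Q.Path v u) (μ : Q.Path u w), ¬ (γ.comp μ).Admissible) :=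
    fun ⟨_, _, h⟩ => ⟨hQ.not_admissible_comp_target_source h,
      hQ.not_admissible_comp_source_target h⟩
  refine ⟨⟨fun ⟨_, _, h⟩ _ _ => hQ.admissible_comp_of_admissible_comp h, fun h2 => ?_⟩, h134,
    fun hvw => ⟨fun h3 => ?_, fun h1 => (h134 h1).1⟩,
    fun huv => ⟨fun h4 => ?_, fun h1 => (h134 h1).2⟩⟩
  · obtain ⟨γ₁, h₁⟩ := hQ.connected u v
    obtain ⟨γ₂, h₂⟩ := hQ.connected v w
    exact ⟨γ₁, γ₂, h2 γ₁ γ₂ h₁ h₂⟩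
  · obtain ⟨hne, σ, -, hσ⟩ := hvw
    obtain ⟨α, hα⟩ := hQ.connected u v
    by_contra h1
    obtain ⟨γ, μ, hγμ⟩ :=
      hQ.exists_admissible_comp_target_source_of_simple hα hσ fun h => h1 ⟨α, σ, h⟩
    exact h3 hne γ μ hγμ
  · obtain ⟨hne, σ, -, hσ⟩ := huv
    obtain ⟨γ, hγ⟩ := hQ.connected v w
    by_contra h1
    obtain ⟨τ, μ, hτμ⟩ :=
      hQ.exists_admissible_comp_source_target_of_simple hσ hγ fun h => h1 ⟨σ, γ, h⟩
    exact h4 hne τ μ hτμ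
end

section
/- Every polygon in a Z^n-quiver equals its hull: if Δ is a finite nonempty set of pairwise neighboring vertices, then P(Δ) = Δ. -/
open CategoryTheory CategoryTheory.Limits

universe u v

namespace TypedQuiver

variable {n : ℕ}

namespace ZnAux

open TypedQuiver TypedQuiver.Path

variable {n : ℕ} {Q : TypedQuiver n} (hQ : Q.IsZn)

/-- The unique out-edge of a vertex of a given type. -/
noncomputable def edge (u : Q.V) (t : Fin (n + 1)) : Q.E :=
  (hQ.unique_out u t).choose

lemma edge_src (u : Q.V) (t : Fin (n + 1)) : Q.src (edge hQ u t) = u :=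
  (hQ.unique_out u t).choose_spec.1.1

lemma edge_typ (u : Q.V) (t : Fin (n + 1)) : Q.typ (edge hQ u t) = t :=
  (hQ.unique_out u t).choose_spec.1.2

lemma edge_eq (e : Q.E) : edge hQ (Q.src e) (Q.typ e) = e :=
  ((hQ.unique_out (Q.src e) (Q.typ e)).choose_spec.2 e ⟨rfl, rfl⟩).symm

/-- One step along the unique out-edge of a type. -/
noncomputable def step (u : Q.V) (t : Fin (n + 1)) : Q.V :=
  Q.tgt (edge hQ u t)

/-- Target of the walk from `u` following a list of types. -/
noncomputable def targ (u : Q.V) (L : List (Fin (n + 1))) : Q.V :=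
  L.foldl (step hQ) u

@[simp] lemma targ_nil (u : Q.V) : targ hQ u [] = u := rfl

@[simp] lemma targ_cons (u : Q.V) (t : Fin (n + 1)) (L : List (Fin (n + 1))) :
    targ hQ u (t :: L) = targ hQ (step hQ u t) L := rfl

lemma targ_append (u : Q.V) (L M : List (Fin (n + 1))) :
    targ hQ u (L ++ M) = targ hQ (targ hQ u L) M :=
  List.foldl_append ..

/-- Prepend an edge to a path. -/
def prep (e : Q.E) : ∀ {w : Q.V}, Q.Path (Q.tgt e) w → Q.Path (Q.src e) w
  | _, .nil _ => .cons e (.nil _)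
  | _, .cons f δ => .cons f (prep e δ)

lemma count_prep (e : Q.E) : ∀ {w : Q.V} (γ : Q.Path (Q.tgt e) w) (t : Fin (n + 1)),
    (prep e γ).count t = γ.count t + (if Q.typ e = t then 1 else 0)
  | _, .nil _, t => by simp [prep, Path.count]
  | _, .cons f δ, t => by
      simp only [prep, Path.count, count_prep e δ t]
      omega

lemma count_cons' (s t : Fin (n + 1)) (L : List (Fin (n + 1))) :
    List.count s (t :: L) = List.count s L + (if t = s then 1 else 0) := by
  by_cases h : t = s
  · subst h; simp [List.count_cons]
  · simp [List.count_cons, h, Ne.symm h]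

lemma count_pair (x y s : Fin (n + 1)) :
    List.count s [x, y] = (if x = s then 1 else 0) + (if y = s then 1 else 0) := by
  rw [count_cons', count_cons', List.count_nil]
  omega

lemma path_cast {u u' w : Q.V} (h : u = u') (γ : Q.Path u w) :
    ∃ δ : Q.Path u' w, ∀ s, δ.count s = γ.count s := by
  subst h
  exact ⟨γ, fun s => rfl⟩

lemma exists_cons' (e : Q.E) {w : Q.V} (γ : Q.Path (Q.tgt e) w) :
    ∃ δ : Q.Path (Q.src e) w, ∀ s, δ.count s = γ.count s + (if Q.typ e = s then 1 else 0) :=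
  ⟨prep e γ, count_prep e γ⟩

lemma exists_path_of_list : ∀ (L : List (Fin (n + 1))) (u : Q.V),
    ∃ γ : Q.Path u (targ hQ u L), ∀ t, γ.count t = L.count t
  | [], u => ⟨.nil u, fun t => by simp [Path.count]⟩
  | t :: L, u => by
      obtain ⟨γ, hγ⟩ := exists_path_of_list L (step hQ u t)
      obtain ⟨δ₀, hδ₀⟩ := exists_cons' (edge hQ u t) γ
      obtain ⟨δ, hδ⟩ := path_cast (edge_src hQ u t) δ₀
      refine ⟨δ, fun s => ?_⟩
      have key : δ.count s = List.count s (t :: L) := by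
        rw [hδ s, hδ₀ s]
        erw [hγ s]
        rw [edge_typ, count_cons']
      exact key

lemma list_of_path : ∀ {u w : Q.V} (γ : Q.Path u w),
    ∃ L : List (Fin (n + 1)), targ hQ u L = w ∧ ∀ t, γ.count t = L.count t
  | u, _, .nil _ => ⟨[], rfl, fun t => by simp [Path.count]⟩
  | u, _, .cons e γ => by
      obtain ⟨L, hL, hc⟩ := list_of_path γ
      refine ⟨L ++ [Q.typ e], ?_, fun t => ?_⟩
      · rw [targ_append, hL]
        show step hQ (Q.src e) (Q.typ e) = Q.tgt e
        unfold step
        rw [edge_eq]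
      · have hr : (Path.cons e γ).count t = γ.count t + (if Q.typ e = t then 1 else 0) := by
          simp [Path.count]
        rw [hr, hc t, List.count_append, count_cons', List.count_nil]
        omega

lemma step_swap (u : Q.V) (x y : Fin (n + 1)) :
    step hQ (step hQ u x) y = step hQ (step hQ u y) x := by
  by_cases hxy : x = y
  · rw [hxy]
  obtain ⟨γ₁, h₁⟩ := exists_path_of_list hQ [x, y] u
  obtain ⟨γ₂, h₂⟩ := exists_path_of_list hQ [y, x] u
  have hc' : ∀ s : Fin (n + 1), List.count s [y, x] = List.count s [x, y] := by
    intro s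
    rw [count_pair, count_pair]
    omega
  by_cases hadm : ∃ s : Fin (n + 1), List.count s [x, y] = 0
  · obtain ⟨s, hs⟩ := hadm
    have a1 : γ₁.Admissible := ⟨s, by rw [h₁ s, hs]⟩
    have a2 : γ₂.Admissible := ⟨s, by rw [h₂ s, hc' s, hs]⟩
    have := (hQ.same_type u _ _ γ₁ γ₂ a1 a2).mpr
      (funext fun s => by rw [h₁ s, h₂ s, hc' s])
    exact this
  · push_neg at hadm
    have hone : ∀ s : Fin (n + 1), List.count s [x, y] = 1 := by
      intro s
      have h0 := hadm s
      rw [count_pair] at h0 ⊢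
      by_cases h1 : x = s
      · have h2 : ¬ y = s := fun h2 => hxy (h1.trans h2.symm)
        rw [if_pos h1, if_neg h2]
      · by_cases h2 : y = s
        · rw [if_neg h1, if_pos h2]
        · rw [if_neg h1, if_neg h2] at h0
          exact absurd rfl h0
    have m1 : γ₁.MaximalSimple := fun s => by rw [h₁ s, hone s]
    have m2 : γ₂.MaximalSimple := fun s => by rw [h₂ s, hc' s, hone s]
    have e1 := hQ.circuit u _ γ₁ m1
    have e2 := hQ.circuit u _ γ₂ m2
    exact e1.symm.trans e2

lemma targ_perm {L₁ L₂ : List (Fin (n + 1))} (h : L₁.Perm L₂) :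
    ∀ u : Q.V, targ hQ u L₁ = targ hQ u L₂ := by
  induction h with
  | nil => intro u; rfl
  | cons t _ ih => intro u; exact ih (step hQ u t)
  | swap x y l => intro u; simp only [targ_cons]; rw [step_swap]
  | trans _ _ ih₁ ih₂ => intro u; exact (ih₁ u).trans (ih₂ u)

lemma targ_round (u : Q.V) : targ hQ u (List.finRange (n + 1)) = u := by
  obtain ⟨γ, hγ⟩ := exists_path_of_list hQ (List.finRange (n + 1)) u
  refine (hQ.circuit u _ γ (fun t => ?_)).symm
  rw [hγ t]
  exact List.count_eq_one_of_mem (List.nodup_finRange _) (List.mem_finRange t)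

lemma perm_erase_all : ∀ (R L : List (Fin (n + 1))), R.Nodup → (∀ r ∈ R, r ∈ L) →
    L.Perm (R ++ List.foldl (fun l r => l.erase r) L R)
  | [], L, _, _ => by simp
  | r :: R, L, hnd, hmem => by
      have hr : r ∈ L := hmem r (by simp)
      have hnd' := (List.nodup_cons.mp hnd)
      have hmem' : ∀ r' ∈ R, r' ∈ L.erase r := by
        intro r' hr'
        have hnee : r' ≠ r := by
          rintro rfl
          exact hnd'.1 hr'
        exact (List.mem_erase_of_ne hnee).mpr (hmem r' (by simp [hr']))
      have ih := perm_erase_all R (L.erase r) hnd'.2 hmem'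
      exact (List.perm_cons_erase hr).trans (ih.cons r)

lemma removal : ∀ (N : ℕ) (L : List (Fin (n + 1))) (u : Q.V), L.length ≤ N →
    ∃ (M : List (Fin (n + 1))) (m : ℕ), targ hQ u M = targ hQ u L ∧
      (∃ s, List.count s M = 0) ∧ ∀ s, List.count s M + m = List.count s L := by
  intro N
  induction N with
  | zero =>
      intro L u hlen
      have : L = [] := List.length_eq_zero_iff.mp (Nat.le_zero.mp hlen)
      subst this
      exact ⟨[], 0, rfl, ⟨0, rfl⟩, fun s => rfl⟩
  | succ N ih =>
      intro L u hlen
      by_cases hz : ∃ s, List.count s L = 0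
      · exact ⟨L, 0, rfl, hz, fun s => rfl⟩
      · push_neg at hz
        set R := List.finRange (n + 1) with hR
        have hsub : ∀ r ∈ R, r ∈ L := by
          intro r _
          have := hz r
          exact List.count_pos_iff.mp (Nat.pos_of_ne_zero this)
        have hperm := perm_erase_all R L (List.nodup_finRange _) hsub
        set rem := List.foldl (fun l r => l.erase r) L R with hrem
        have hcnt : ∀ s, List.count s L = 1 + List.count s rem := by
          intro s
          have h1 := hperm.count_eq s
          rw [List.count_append] at h1
          have h2 : List.count s R = 1 :=
            List.count_eq_one_of_mem (List.nodup_finRange _) (List.mem_finRange s)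
          omega
        have hlen2 : rem.length ≤ N := by
          have h1 := hperm.length_eq
          rw [List.length_append] at h1
          have h2 : R.length = n + 1 := List.length_finRange
          omega
        obtain ⟨M, m, ht, hadm, hc⟩ := ih rem u hlen2
        refine ⟨M, m + 1, ?_, hadm, fun s => ?_⟩
        · rw [ht, targ_perm hQ hperm u, targ_append, targ_round]
        · have := hc s
          have := hcnt s
          omega

/-- The count function of admissible paths between two vertices. -/
noncomputable def Dv (u w : Q.V) : Fin (n + 1) → ℕ :=
  (hQ.connected u w).choose.count

lemma Dv_adm (u w : Q.V) : ∃ s, Dv hQ u w s = 0 :=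
  (hQ.connected u w).choose_spec

lemma adm_count {u w : Q.V} (γ : Q.Path u w) (h : γ.Admissible) :
    γ.count = Dv hQ u w :=
  (hQ.same_type u w w γ _ h (hQ.connected u w).choose_spec).mp rfl

lemma Dv_inj {u w x : Q.V} (h : Dv hQ u w = Dv hQ u x) : w = x :=
  (hQ.same_type u w x _ _ (hQ.connected u w).choose_spec
    (hQ.connected u x).choose_spec).mpr h

lemma Dv_self (u : Q.V) (s : Fin (n + 1)) : Dv hQ u u s = 0 := by
  have h : (Path.nil u : Q.Path u u).count = Dv hQ u u :=
    adm_count hQ (Path.nil u) ⟨0, by simp [Path.count]⟩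
  rw [← h]
  simp [Path.count]

lemma Dv_cocycle (u w x : Q.V) :
    ∃ m, ∀ s, Dv hQ u w s + Dv hQ w x s = Dv hQ u x s + m := by
  obtain ⟨L₁, hL₁, hc₁⟩ := list_of_path hQ (hQ.connected u w).choose
  obtain ⟨L₂, hL₂, hc₂⟩ := list_of_path hQ (hQ.connected w x).choose
  have htarg : targ hQ u (L₁ ++ L₂) = x := by
    rw [targ_append, hL₁, hL₂]
  obtain ⟨M, m, hMt, hMadm, hMc⟩ :=
    removal hQ (L₁ ++ L₂).length (L₁ ++ L₂) u le_rfl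
  obtain ⟨δ, hδ⟩ := exists_path_of_list hQ M u
  have hx : targ hQ u M = x := hMt.trans htarg
  have hδadm : δ.Admissible := by
    obtain ⟨s, hs⟩ := hMadm
    exact ⟨s, by rw [hδ s, hs]⟩
  have hδD := adm_count hQ δ hδadm
  refine ⟨m, fun s => ?_⟩
  have e1 : Dv hQ u w s = List.count s L₁ := hc₁ s
  have e2 : Dv hQ w x s = List.count s L₂ := hc₂ s
  have e3 : Dv hQ u x s = List.count s M := by
    rw [← hx, ← congrFun hδD s, hδ s]
  have e4 := hMc s
  rw [e1, e2, e3, ← List.count_append]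
  omega

end ZnAux

end TypedQuiver
open TypedQuiver in
/-- Every polygon (finite nonempty set of pairwise neighboring vertices)
in a `ℤⁿ`-quiver equals its hull. -/
theorem stmt7 {n : ℕ} (Q : TypedQuiver n) (hQ : Q.IsZn) (Δ : Set Q.V)
    (hfin : Δ.Finite) (hne : Δ.Nonempty)
    (hpoly : ∀ u ∈ Δ, ∀ w ∈ Δ, u ≠ w → Q.Neighbors u w) :
    hull Q Δ = Δ := by
  apply Set.Subset.antisymm
  · intro v hv
    obtain ⟨z0, hz0⟩ := hne
    have hv' : ∀ t, ∃ z ∈ Δ, ZnAux.Dv hQ z v t = 0 := by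
      intro t
      obtain ⟨z, hz, γ, hγ⟩ := hv t
      exact ⟨z, hz, by rw [← congrFun (ZnAux.adm_count hQ γ ⟨t, hγ⟩) t]; exact hγ⟩
    have hb01 : ∀ w ∈ Δ, ∀ s, ZnAux.Dv hQ z0 w s ≤ 1 := by
      intro w hw s
      by_cases h : z0 = w
      · subst h; rw [ZnAux.Dv_self hQ]; omega
      · obtain ⟨_, γ, hadm, hsimp⟩ := hpoly z0 hz0 w hw h
        rw [← congrFun (ZnAux.adm_count hQ γ hadm) s]
        exact hsimp s
    have key : ∀ t, ∃ z ∈ Δ, ∃ k,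
        (∀ s, ZnAux.Dv hQ z0 z s + ZnAux.Dv hQ z v s = ZnAux.Dv hQ z0 v s + k) ∧
        ZnAux.Dv hQ z v t = 0 := by
      intro t
      obtain ⟨z, hz, h0⟩ := hv' t
      obtain ⟨k, hk⟩ := ZnAux.Dv_cocycle hQ z0 z v
      exact ⟨z, hz, k, hk, h0⟩
    have hd1 : ∀ t, ZnAux.Dv hQ z0 v t ≤ 1 := by
      intro t
      obtain ⟨z, hz, k, hk, h0⟩ := key t
      have h1 := hk t
      have h2 := hb01 z hz t
      omega
    by_cases hS : ∀ s, ZnAux.Dv hQ z0 v s = 0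
    · have hveq : v = z0 :=
        ZnAux.Dv_inj hQ (funext fun s => (hS s).trans (ZnAux.Dv_self hQ z0 s).symm)
      rwa [hveq]
    · have claimA : ∀ t, ZnAux.Dv hQ z0 v t = 1 → ∃ z ∈ Δ,
          (∀ s, ZnAux.Dv hQ z0 z s ≤ ZnAux.Dv hQ z0 v s) ∧ ZnAux.Dv hQ z0 z t = 1 := by
        intro t ht
        obtain ⟨z, hz, k, hk, h0⟩ := key t
        have h1 := hk t
        have h2 := hb01 z hz t
        have hk0 : k = 0 := by omega
        refine ⟨z, hz, fun s => ?_, by omega⟩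
        have := hk s
        omega
      have claimB : ∀ w ∈ Δ, ∀ w' ∈ Δ,
          (∀ s, ZnAux.Dv hQ z0 w s ≤ ZnAux.Dv hQ z0 w' s) ∨
          (∀ s, ZnAux.Dv hQ z0 w' s ≤ ZnAux.Dv hQ z0 w s) := by
        intro w hw w' hw'
        by_cases hww : w = w'
        · subst hww; exact Or.inl fun s => le_rfl
        · obtain ⟨_, γ, hadm, hsimp⟩ := hpoly w hw w' hw' hww
          have hc1 : ∀ s, ZnAux.Dv hQ w w' s ≤ 1 := by
            intro s
            rw [← congrFun (ZnAux.adm_count hQ γ hadm) s]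
            exact hsimp s
          obtain ⟨s0, hs0⟩ := ZnAux.Dv_adm hQ w w'
          obtain ⟨m, hm⟩ := ZnAux.Dv_cocycle hQ z0 w w'
          rcases Nat.lt_or_ge m 1 with h | h
          · left
            intro s
            have := hm s
            omega
          · right
            intro s
            have := hm s
            have := hc1 s
            omega
      set f : Q.V → ℕ := fun w => ∑ s, ZnAux.Dv hQ z0 w s with hf
      set A : Set ℕ := {k : ℕ | ∃ w ∈ Δ,
        (∀ s, ZnAux.Dv hQ z0 w s ≤ ZnAux.Dv hQ z0 v s) ∧ f w = k} with hA
      have hAne : A.Nonempty := by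
        push_neg at hS
        obtain ⟨t0, ht0⟩ := hS
        have ht0' : ZnAux.Dv hQ z0 v t0 = 1 := by
          have := hd1 t0
          omega
        obtain ⟨z, hz, hle, _⟩ := claimA t0 ht0'
        exact ⟨f z, z, hz, hle, rfl⟩
      have hAbdd : BddAbove A := by
        refine ⟨(n + 1), fun k hk => ?_⟩
        obtain ⟨w, hw, hle, hfw⟩ := hk
        rw [← hfw, hf]
        calc (∑ s, ZnAux.Dv hQ z0 w s) ≤ ∑ _s : Fin (n + 1), 1 :=
              Finset.sum_le_sum (fun s _ => hb01 w hw s)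
          _ = n + 1 := by simp
      obtain ⟨w', hw'Δ, hw'le, hfw'⟩ := Nat.sSup_mem hAne hAbdd
      have hfull : ∀ t, ZnAux.Dv hQ z0 v t = 1 → ZnAux.Dv hQ z0 w' t = 1 := by
        intro t ht
        obtain ⟨z, hzΔ, hzle, hzt⟩ := claimA t ht
        rcases claimB z hzΔ w' hw'Δ with h | h
        · have := h t
          have := hb01 w' hw'Δ t
          omega
        · by_contra hne'
          have hlt : ZnAux.Dv hQ z0 w' t < ZnAux.Dv hQ z0 z t := by
            have := h t
            omega
          have hsum : f w' < f z :=
            Finset.sum_lt_sum (fun s _ => h s) ⟨t, Finset.mem_univ t, hlt⟩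
          have hle2 : f z ≤ sSup A := le_csSup hAbdd ⟨z, hzΔ, hzle, rfl⟩
          omega
      have heq : ZnAux.Dv hQ z0 w' = ZnAux.Dv hQ z0 v := by
        funext s
        have h1 := hw'le s
        have h2 := hd1 s
        rcases Nat.le_one_iff_eq_zero_or_eq_one.mp h2 with h | h
        · omega
        · rw [h]
          exact hfull s h
      have : w' = v := ZnAux.Dv_inj hQ heq
      exact this ▸ hw'Δ
  · intro v hv t
    exact ⟨v, hv, Path.nil v, by simp [Path.count]⟩
end
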